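/- Let p > 1, γ > 0, and φ: R^n → R ∪ {+∞} be proper lsc. For any u ∈ R^n, any z ∈ prox_φ^{γ,p}(u), and any Fréchet subgradient ζ ∈ ∂̂(φ_γ^p)(u) of the high-order Moreau envelope at u, it holds that ζ = (1/γ)‖u − z‖^{p−2}(u − z); in particular, the Fréchet subdifferential ∂̂(φ_γ^p)(u) contains at most one element whenever prox_φ^{γ,p}(u) is nonempty. -/

import Mathlib

open Filter Topology



/-- The high-order Moreau envelope of parameter `γ` and order `p`. -/
noncomputable def highOrderMoreau {n : ℕ} (p γ : ℝ)
    (φ : EuclideanSpace ℝ (Fin n) → EReal) (x : EuclideanSpace ℝ (Fin n)) : EReal :=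
  ⨅ y : EuclideanSpace ℝ (Fin n),
    φ y + (((1 / (p * γ)) * ‖x - y‖ ^ p : ℝ) : EReal)

/-- The high-order proximal operator (HOPE). -/
def highOrderProx {n : ℕ} (p γ : ℝ)
    (φ : EuclideanSpace ℝ (Fin n) → EReal) (x : EuclideanSpace ℝ (Fin n)) :
    Set (EuclideanSpace ℝ (Fin n)) :=
  {y | ∀ z, φ y + (((1 / (p * γ)) * ‖x - y‖ ^ p : ℝ) : EReal) ≤
            φ z + (((1 / (p * γ)) * ‖x - z‖ ^ p : ℝ) : EReal)}

/-- `ζ` is a Fréchet subgradient of `h : ℝⁿ → ℝ ∪ {±∞}` at `x̄`: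
`liminf_{x→x̄} (h(x) − h(x̄) − ⟨ζ, x−x̄⟩)/‖x−x̄‖ ≥ 0`, expressed in the
equivalent "eventually" form: for every `ε > 0`, eventually near `x̄`,
`h(x̄) + ⟨ζ, x−x̄⟩ − ε‖x−x̄‖ ≤ h(x)`. -/
def FrechetSubgradient {n : ℕ} (h : EuclideanSpace ℝ (Fin n) → EReal)
    (xbar ζ : EuclideanSpace ℝ (Fin n)) : Prop :=
  ∀ ε : ℝ, 0 < ε →
    ∀ᶠ x in nhds xbar,
      h xbar + (((inner ℝ ζ (x - xbar) : ℝ) - ε * ‖x - xbar‖ : ℝ) : EReal) ≤ h x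

section Aux

variable {n : ℕ}

local notation "E" => EuclideanSpace ℝ (Fin n)

theorem my_aux_key (p γ : ℝ) (hp : 1 < p) (hγ : 0 < γ)
    (φ : EuclideanSpace ℝ (Fin n) → EReal)
    (hbot : ∀ x, φ x ≠ ⊥) (hproper : ∃ x, φ x ≠ ⊤)
    (u z ζ : EuclideanSpace ℝ (Fin n))
    (hz : ∀ y, φ z + (((1 / (p * γ)) * ‖u - z‖ ^ p : ℝ) : EReal) ≤
            φ y + (((1 / (p * γ)) * ‖u - y‖ ^ p : ℝ) : EReal))
    (hζ : ∀ ε : ℝ, 0 < ε →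
      ∀ᶠ x in nhds u,
        (⨅ y : E, φ y + (((1 / (p * γ)) * ‖u - y‖ ^ p : ℝ) : EReal))
          + (((inner ℝ ζ (x - u) : ℝ) - ε * ‖x - u‖ : ℝ) : EReal)
          ≤ ⨅ y : E, φ y + (((1 / (p * γ)) * ‖x - y‖ ^ p : ℝ) : EReal)) :
    ζ = ((1 / γ) * ‖u - z‖ ^ (p - 2)) • (u - z) := by
  have hp0 : p ≠ 0 := by linarith
  have hγ0 : γ ≠ 0 := ne_of_gt hγ
  -- φ z is finite
  obtain ⟨y₀, hy₀⟩ := hproper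
  have hzt : φ z ≠ ⊤ := by
    intro htop
    have h1 := hz y₀
    rw [htop, EReal.top_add_coe] at h1
    have h2 : φ y₀ + (((1 / (p * γ)) * ‖u - y₀‖ ^ p : ℝ) : EReal) < ⊤ :=
      EReal.add_lt_top hy₀ (EReal.coe_ne_top _)
    exact absurd (lt_of_le_of_lt h1 h2) (lt_irrefl _)
  set φz : ℝ := (φ z).toReal with hφzdef
  have hφz : (φz : EReal) = φ z := EReal.coe_toReal hzt (hbot z)
  -- value of the envelope at u
  have henv_u : (⨅ y : E, φ y + (((1 / (p * γ)) * ‖u - y‖ ^ p : ℝ) : EReal))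
      = ((φz + (1 / (p * γ)) * ‖u - z‖ ^ p : ℝ) : EReal) := by
    apply le_antisymm
    · have := iInf_le (fun y : E => φ y + (((1 / (p * γ)) * ‖u - y‖ ^ p : ℝ) : EReal)) z
      rwa [← hφz, ← EReal.coe_add] at this
    · refine le_iInf fun y => ?_
      have := hz y
      rwa [← hφz, ← EReal.coe_add] at this
  -- upper bound on the envelope
  have henv_le : ∀ x : E, (⨅ y : E, φ y + (((1 / (p * γ)) * ‖x - y‖ ^ p : ℝ) : EReal))
      ≤ ((φz + (1 / (p * γ)) * ‖x - z‖ ^ p : ℝ) : EReal) := by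
    intro x
    have := iInf_le (fun y : E => φ y + (((1 / (p * γ)) * ‖x - y‖ ^ p : ℝ) : EReal)) z
    rwa [← hφz, ← EReal.coe_add] at this
  -- real-valued subgradient inequality
  have h6 : ∀ ε : ℝ, 0 < ε → ∀ᶠ x in nhds u,
      (inner ℝ ζ (x - u) : ℝ) - ε * ‖x - u‖ ≤
        (1 / (p * γ)) * ‖x - z‖ ^ p - (1 / (p * γ)) * ‖u - z‖ ^ p := by
    intro ε hε
    filter_upwards [hζ ε hε] with x hx
    have hle := le_trans hx (henv_le x)
    rw [henv_u, ← EReal.coe_add, EReal.coe_le_coe_iff] at hle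
    linarith
  -- the candidate subgradient
  set a : E := u - z with ha
  set w : E := ((1 / γ) * ‖a‖ ^ (p - 2)) • a with hw
  set v : E := ζ - w with hv
  -- derivative of the upper bound function
  have ht : HasFDerivAt (fun x : E => ‖x - z‖ ^ p)
      ((p * ‖a‖ ^ (p - 2)) • innerSL ℝ a) u := by
    have h1 := hasFDerivAt_norm_rpow (u - z) hp
    have h2 : HasFDerivAt (fun x : E => x - z) (ContinuousLinearMap.id ℝ E) u :=
      (hasFDerivAt_id u).sub_const z
    have h3 := h1.comp u h2
    simpa [ha, Function.comp_def] using h3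
  have hf : HasFDerivAt (fun x : E => (1 / (p * γ)) * ‖x - z‖ ^ p)
      ((1 / (p * γ)) • ((p * ‖a‖ ^ (p - 2)) • innerSL ℝ a)) u := ht.const_mul _
  -- line restriction
  have hcurve : HasDerivAt (fun t : ℝ => u + t • v) v 0 := by
    simpa using ((hasDerivAt_id (0 : ℝ)).smul_const v).const_add u
  have h0 : u + (0 : ℝ) • v = u := by simp
  have hf' : HasFDerivAt (fun x : E => (1 / (p * γ)) * ‖x - z‖ ^ p)
      ((1 / (p * γ)) • ((p * ‖a‖ ^ (p - 2)) • innerSL ℝ a)) (u + (0 : ℝ) • v) := by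
    rwa [h0]
  have hline := hf'.comp_hasDerivAt 0 hcurve
  -- the value of the derivative is ⟪w, v⟫
  have hd : (((1 / (p * γ)) • ((p * ‖a‖ ^ (p - 2)) • innerSL ℝ a)) v : ℝ)
      = (inner ℝ w v : ℝ) := by
    rw [hw, real_inner_smul_left]
    simp only [ContinuousLinearMap.coe_smul', Pi.smul_apply, innerSL_apply_apply, smul_eq_mul]
    field_simp
  rw [hd] at hline
  rw [hasDerivAt_iff_tendsto_slope] at hline
  have hsub : (𝓝[>] (0:ℝ)) ≤ (𝓝[≠] (0:ℝ)) :=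
    nhdsWithin_mono _ fun t ht => ne_of_gt ht
  have hline' := hline.mono_left hsub
  -- key inequality for every ε
  have hkey : ∀ ε : ℝ, 0 < ε → (inner ℝ ζ v : ℝ) - ε * ‖v‖ ≤ (inner ℝ w v : ℝ) := by
    intro ε hε
    refine ge_of_tendsto hline' ?_
    have hcont : Tendsto (fun t : ℝ => u + t • v) (nhds 0) (nhds u) := by
      have hc : Continuous (fun t : ℝ => u + t • v) :=
        continuous_const.add (continuous_id.smul continuous_const)
      simpa using hc.tendsto 0
    have hev : ∀ᶠ t in 𝓝 (0:ℝ),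
        (inner ℝ ζ ((u + t • v) - u) : ℝ) - ε * ‖(u + t • v) - u‖ ≤
          (1 / (p * γ)) * ‖(u + t • v) - z‖ ^ p - (1 / (p * γ)) * ‖u - z‖ ^ p :=
      hcont.eventually (h6 ε hε)
    filter_upwards [eventually_nhdsWithin_of_eventually_nhds hev,
      self_mem_nhdsWithin] with t htt (htpos : 0 < t)
    have hsimp : (u + t • v) - u = t • v := by abel
    rw [hsimp, real_inner_smul_right, norm_smul, Real.norm_eq_abs,
      abs_of_pos htpos] at htt
    have hslope : slope ((fun x : E => (1 / (p * γ)) * ‖x - z‖ ^ p) ∘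
        fun t : ℝ => u + t • v) 0 t
        = ((1 / (p * γ)) * ‖(u + t • v) - z‖ ^ p - (1 / (p * γ)) * ‖u - z‖ ^ p) / t := by
      rw [slope_def_field]
      simp [Function.comp, h0]
    rw [hslope, le_div_iff₀ htpos]
    nlinarith [htt]
  -- conclude v = 0
  have hwv : (inner ℝ ζ v : ℝ) - inner ℝ w v = inner ℝ v v := by
    rw [hv, inner_sub_left]
  have hsmall : ∀ ε : ℝ, 0 < ε → (inner ℝ v v : ℝ) ≤ ε * ‖v‖ := by
    intro ε hε
    have := hkey ε hε
    linarith [hwv]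
  have hfin : v = 0 := by
    by_contra hne
    have hnv : 0 < ‖v‖ := norm_pos_iff.mpr hne
    have h1 := hsmall (‖v‖ / 2) (by positivity)
    rw [real_inner_self_eq_norm_mul_norm] at h1
    nlinarith
  rw [hv, sub_eq_zero] at hfin
  exact hfin

end Aux

/-- Fréchet subgradients of HOME: for `p > 1`, `γ > 0`, and a proper lsc `φ`,
if `z ∈ prox_φ^{γ,p}(u)` and `ζ` is a Fréchet subgradient of the high-order
Moreau envelope at `u`, then `ζ = (1/γ)‖u − z‖^(p−2)(u − z)`; in particular the
Fréchet subdifferential of the envelope at `u` has at most one element whenever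
`prox_φ^{γ,p}(u)` is nonempty. -/
theorem stmt_19 {n : ℕ} (p γ : ℝ) (hp : 1 < p) (hγ : 0 < γ)
    (φ : EuclideanSpace ℝ (Fin n) → EReal)
    (hlsc : LowerSemicontinuous φ)
    (hbot : ∀ x, φ x ≠ ⊥) (hproper : ∃ x, φ x ≠ ⊤) :
    (∀ (u z ζ : EuclideanSpace ℝ (Fin n)),
      z ∈ highOrderProx p γ φ u →
      FrechetSubgradient (highOrderMoreau p γ φ) u ζ →
      ζ = ((1 / γ) * ‖u - z‖ ^ (p - 2)) • (u - z)) ∧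
    (∀ u : EuclideanSpace ℝ (Fin n), (highOrderProx p γ φ u).Nonempty →
      ∀ ζ₁ ζ₂, FrechetSubgradient (highOrderMoreau p γ φ) u ζ₁ →
        FrechetSubgradient (highOrderMoreau p γ φ) u ζ₂ → ζ₁ = ζ₂) := by
  constructor
  · intro u z ζ hz hζ
    simp only [highOrderProx, Set.mem_setOf_eq] at hz
    simp only [FrechetSubgradient, highOrderMoreau] at hζ
    exact my_aux_key p γ hp hγ φ hbot hproper u z ζ hz hζ
  · rintro u ⟨z, hz⟩ ζ₁ ζ₂ h₁ h₂
    have e₁ : ζ₁ = ((1 / γ) * ‖u - z‖ ^ (p - 2)) • (u - z) := by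
      simp only [highOrderProx, Set.mem_setOf_eq] at hz
      simp only [FrechetSubgradient, highOrderMoreau] at h₁
      exact my_aux_key p γ hp hγ φ hbot hproper u z ζ₁ hz h₁
    have e₂ : ζ₂ = ((1 / γ) * ‖u - z‖ ^ (p - 2)) • (u - z) := by
      simp only [highOrderProx, Set.mem_setOf_eq] at hz
      simp only [FrechetSubgradient, highOrderMoreau] at h₂
      exact my_aux_key p γ hp hγ φ hbot hproper u z ζ₂ hz h₂
    rw [e₁, e₂]
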